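/- Let (B,W) be a polygonal coloring of the plane with boundary ∂ that satisfies condition (C3). Then there exists a set B' ⊆ ℝ² with B' Δ B ⊆ ∂ (a twin coloring: it has the same boundary and assigns the same colors to all points off ∂) such that there are no points X, Y, Z with dist(X,Y) = dist(Y,Z) = dist(Z,X) = 1 all lying in B' or all lying in ℝ² \ B'. -/

import Mathlib

open scoped RealInnerProductSpace

noncomputable section

/-- `l` is an (affine) line in the plane: a nonempty one-dimensional affine subspace. -/
def IsLine (l : AffineSubspace ℝ (EuclideanSpace ℝ (Fin 2))) : Prop :=
  (l : Set (EuclideanSpace ℝ (Fin 2))).Nonempty ∧ Module.finrank ℝ l.direction = 1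

/-- A boundary segment: a closed convex subset of some affine line, containing
more than one point (it may be a segment, a ray, or a full line). -/
def IsSeg (s : Set (EuclideanSpace ℝ (Fin 2))) : Prop :=
  IsClosed s ∧ Convex ℝ s ∧ s.Nontrivial ∧
    ∃ l : AffineSubspace ℝ (EuclideanSpace ℝ (Fin 2)), IsLine l ∧ s ⊆ (l : Set _)

/-- `x` is an endpoint of the segment `s`: a point of `s` not in its relative
(intrinsic) interior. -/
def IsEndpoint (x : EuclideanSpace ℝ (Fin 2)) (s : Set (EuclideanSpace ℝ (Fin 2))) : Prop :=
  x ∈ s ∧ x ∉ intrinsicInterior ℝ s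

/-- The coloring `(B, Bᶜ)` is polygonal, with set of boundary segments `S`. -/
structure IsPolygonal (B : Set (EuclideanSpace ℝ (Fin 2)))
    (S : Set (Set (EuclideanSpace ℝ (Fin 2)))) : Prop where
  /-- The black points lie in the closure of the black interior. -/
  black_sub : B ⊆ closure (interior B)
  /-- The white points lie in the closure of the white interior. -/
  white_sub : Bᶜ ⊆ closure (interior Bᶜ)
  /-- Every member of `S` is a boundary segment. -/
  seg : ∀ s ∈ S, IsSeg s
  /-- The boundary of the coloring is the union of the boundary segments. -/
  boundary : frontier B = ⋃₀ S
  /-- Two distinct boundary segments meet in at most one point. -/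
  inter_subsingleton : ∀ s ∈ S, ∀ t ∈ S, s ≠ t → (s ∩ t).Subsingleton
  /-- A common point of two distinct boundary segments is an endpoint of both. -/
  inter_endpoint : ∀ s ∈ S, ∀ t ∈ S, s ≠ t → ∀ x ∈ s ∩ t, IsEndpoint x s ∧ IsEndpoint x t
  /-- No two distinct boundary segments sharing a common point lie on a common line. -/
  no_common_line : ∀ s ∈ S, ∀ t ∈ S, s ≠ t → (s ∩ t).Nonempty →
      ¬∃ l : AffineSubspace ℝ (EuclideanSpace ℝ (Fin 2)),
        IsLine l ∧ s ⊆ (l : Set _) ∧ t ⊆ (l : Set _)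
  /-- Every bounded region meets only finitely many boundary segments. -/
  loc_finite : ∀ R : Set (EuclideanSpace ℝ (Fin 2)), Bornology.IsBounded R →
      {s ∈ S | (s ∩ R).Nonempty}.Finite

/-- Condition (C3): every monochromatic unit triangle has a vertex on the boundary. -/
def C3 (B : Set (EuclideanSpace ℝ (Fin 2))) : Prop :=
  ∀ X Y Z : EuclideanSpace ℝ (Fin 2),
    dist X Y = 1 → dist Y Z = 1 → dist Z X = 1 →
    ((X ∈ B ∧ Y ∈ B ∧ Z ∈ B) ∨ (X ∉ B ∧ Y ∉ B ∧ Z ∉ B)) →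
    X ∈ frontier B ∨ Y ∈ frontier B ∨ Z ∈ frontier B

/-- `x` is a boundary vertex: an endpoint of some boundary segment. -/
def IsVertex (S : Set (Set (EuclideanSpace ℝ (Fin 2)))) (x : EuclideanSpace ℝ (Fin 2)) : Prop :=
  ∃ s ∈ S, IsEndpoint x s

/-- A boundary point `A` is feasible if it is not a boundary vertex and the unit
circle centered at `A` contains no boundary vertex. -/
def Feasible (B : Set (EuclideanSpace ℝ (Fin 2))) (S : Set (Set (EuclideanSpace ℝ (Fin 2))))
    (A : EuclideanSpace ℝ (Fin 2)) : Prop :=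
  A ∈ frontier B ∧ ¬IsVertex S A ∧ ∀ P ∈ Metric.sphere A 1, ¬IsVertex S P

/-- Two segments are parallel: any lines containing them have the same direction. -/
def SegParallel (s t : Set (EuclideanSpace ℝ (Fin 2))) : Prop :=
  ∀ l₁ l₂ : AffineSubspace ℝ (EuclideanSpace ℝ (Fin 2)),
    IsLine l₁ → IsLine l₂ → s ⊆ (l₁ : Set _) → t ⊆ (l₂ : Set _) →
    l₁.direction = l₂.direction

end

noncomputable section

/-!
Recolour every point `P` by the colour of a thin sector at `P` just above the horizontal ray to
the right: `P` is black when `P + ε (1, θ)` lies in the interior of `B` for all sufficiently small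
`θ > 0` and then all sufficiently small `ε > 0`. Off the boundary this is the colour of `P`. On the
boundary it is still well defined, because near `P` the boundary lies in finitely many lines through
`P`, so a thin enough sector is a connected set avoiding the boundary, hence lies in one open colour
class. A monochromatic unit triangle of the new colouring is then moved by one small common vector
into the interior of a single colour class, contradicting (C3).
-/

open Filter Topology Set Metric Module

section PolygonalColoring

lemma disjoint_interior_interior_compl {X : Type*} [TopologicalSpace X] (B : Set X) :
    Disjoint (interior B) (interior Bᶜ) :=
  disjoint_compl_right.mono interior_subset interior_subset

local notation "E²" => EuclideanSpace ℝ (Fin 2)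

def slopeDir (θ : ℝ) : E² := !₂[1, θ]

@[fun_prop]
lemma continuous_slopeDir : Continuous slopeDir :=
  (PiLp.continuous_toLp 2 _).comp <| continuous_pi fun i => by fin_cases i <;> fun_prop

lemma norm_slopeDir_lt_two {θ : ℝ} (hθ : |θ| < 1) : ‖slopeDir θ‖ < 2 := by
  rw [EuclideanSpace.norm_eq, Real.sqrt_lt' two_pos, Fin.sum_univ_two]
  simp [slopeDir, Real.norm_eq_abs]
  nlinarith [sq_abs θ, abs_nonneg θ]

lemma setOf_slopeDir_mem_subsingleton {D : Submodule ℝ E²} (hD : finrank ℝ D = 1) :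
    {θ | slopeDir θ ∈ D}.Subsingleton := by
  intro a ha b hb
  have ha0 : (⟨slopeDir a, ha⟩ : D) ≠ 0 := fun h => by
    simpa [slopeDir] using congrArg (fun v : D => (v : E²) 0) h
  obtain ⟨c, hc⟩ := (finrank_eq_one_iff_of_nonzero' _ ha0).1 hD ⟨slopeDir b, hb⟩
  have h0 := congrArg (fun v : D => (v : E²) 0) hc
  have h1 := congrArg (fun v : D => (v : E²) 1) hc
  simp [slopeDir] at h0 h1
  rw [← h1, h0, one_mul]

def NearSector (U : Set E²) (P : E²) : Prop :=
  ∀ᶠ θ in 𝓝[>] (0 : ℝ), ∀ᶠ ε in 𝓝[>] (0 : ℝ), P + ε • slopeDir θ ∈ U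

lemma nearSector_of_mem_nhds {U : Set E²} {P : E²} (hU : U ∈ 𝓝 P) : NearSector U P := by
  refine Eventually.of_forall fun θ => ?_
  have : Tendsto (fun ε : ℝ => P + ε • slopeDir θ) (𝓝[>] (0 : ℝ)) (𝓝 P) :=
    ((by fun_prop : Continuous fun ε : ℝ => P + ε • slopeDir θ).tendsto' 0 P
      (by simp)).mono_left nhdsWithin_le_nhds
  exact this.eventually_mem hU

lemma NearSector.not_of_disjoint {U V : Set E²} {P : E²} (hUV : Disjoint U V)
    (hU : NearSector U P) : ¬NearSector V P := fun hV => by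
  obtain ⟨θ, hθ⟩ := (hU.and hV).exists
  obtain ⟨ε, hU, hV⟩ := (hθ.1.and hθ.2).exists
  exact hUV.notMem_of_mem_left hU hV

lemma NearSector.exists_common_translate {U : Set E²} {X Y Z : E²} (hX : NearSector U X)
    (hY : NearSector U Y) (hZ : NearSector U Z) :
    ∃ v : E², X + v ∈ U ∧ Y + v ∈ U ∧ Z + v ∈ U := by
  obtain ⟨θ, hX, hY, hZ⟩ := (hX.and (hY.and hZ)).exists
  obtain ⟨ε, h⟩ := (hX.and (hY.and hZ)).exists
  exact ⟨ε • slopeDir θ, h⟩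

lemma nearSector_of_image_subset {U : Set E²} {P : E²} {ρ θ₁ : ℝ} (hρ : 0 < ρ) (hθ₁ : 0 < θ₁)
    (h : (fun p : ℝ × ℝ => P + p.1 • slopeDir p.2) '' (Ioo 0 ρ ×ˢ Ioo 0 θ₁) ⊆ U) :
    NearSector U P := by
  filter_upwards [Ioo_mem_nhdsGT hθ₁] with θ hθ
  filter_upwards [Ioo_mem_nhdsGT hρ] with ε hε
  exact h ⟨(ε, θ), ⟨hε, hθ⟩, rfl⟩

lemma nearSector_interior_iff_mem {B : Set E²} {x : E²} (hx : x ∉ frontier B) :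
    NearSector (interior B) x ↔ x ∈ B := by
  rcases compl_frontier_eq_union_interior.subset hx with hB | hW
  · exact iff_of_true (nearSector_of_mem_nhds (isOpen_interior.mem_nhds hB)) (interior_subset hB)
  · exact iff_of_false
      ((nearSector_of_mem_nhds (isOpen_interior.mem_nhds hW)).not_of_disjoint
        (disjoint_interior_interior_compl B).symm)
      (interior_subset hW)

lemma nearSector_interior_or_nearSector_interior_compl {B : Set E²} {P : E²} {r : ℝ}
    (hr : 0 < r) {L : Set (Submodule ℝ E²)} (hL : L.Finite) (hLrank : ∀ D ∈ L, finrank ℝ D = 1)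
    (hfrontier : ∀ x ∈ ball P r ∩ frontier B, ∃ D ∈ L, x - P ∈ D) :
    NearSector (interior B) P ∨ NearSector (interior Bᶜ) P := by
  have hbad : (⋃ D ∈ L, {θ | slopeDir θ ∈ D}).Finite :=
    hL.biUnion fun D hD => (setOf_slopeDir_mem_subsingleton (hLrank D hD)).finite
  have hgood : ∀ᶠ θ in 𝓝[>] (0 : ℝ), θ < 1 ∧ θ ∉ ⋃ D ∈ L, {θ | slopeDir θ ∈ D} :=
    ((eventually_lt_nhds one_pos).filter_mono nhdsWithin_le_nhds).and
      ((nhdsGT_le_nhdsNE 0).trans (nhdsNE_le_cofinite 0) hbad.compl_mem_cofinite)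
  obtain ⟨θ₁, hθ₁, hsub⟩ := mem_nhdsGT_iff_exists_Ioo_subset.1 hgood
  set K := (fun p : ℝ × ℝ => P + p.1 • slopeDir p.2) '' (Ioo 0 (r / 2) ×ˢ Ioo 0 θ₁)
  have hK : IsPreconnected K :=
    ((convex_Ioo _ _).prod (convex_Ioo _ _)).isPreconnected.image _
      (by fun_prop : Continuous fun p : ℝ × ℝ => P + p.1 • slopeDir p.2).continuousOn
  have hKfrontier : K ⊆ interior B ∪ interior Bᶜ := by
    rintro _ ⟨⟨ε, θ⟩, ⟨hε, hθ⟩, rfl⟩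
    refine compl_frontier_eq_union_interior.subset fun hfr => ?_
    obtain ⟨hθ1, hθbad⟩ := hsub hθ
    have hball : P + ε • slopeDir θ ∈ ball P r := by
      rw [mem_ball, dist_self_add_left, norm_smul, Real.norm_of_nonneg hε.1.le]
      calc ε * ‖slopeDir θ‖ < r / 2 * 2 :=
            mul_lt_mul'' hε.2 (norm_slopeDir_lt_two (abs_lt.2 ⟨by linarith [hθ.1], hθ1⟩))
              hε.1.le (norm_nonneg _)
        _ = r := by ring
    obtain ⟨D, hD, hmem⟩ := hfrontier _ ⟨hball, hfr⟩
    rw [add_sub_cancel_left, Submodule.smul_mem_iff _ hε.1.ne'] at hmem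
    exact hθbad (mem_biUnion hD hmem)
  rcases hK.subset_or_subset isOpen_interior isOpen_interior
    (disjoint_interior_interior_compl B) hKfrontier with h | h
  exacts [.inl (nearSector_of_image_subset (half_pos hr) hθ₁ h),
    .inr (nearSector_of_image_subset (half_pos hr) hθ₁ h)]

lemma IsPolygonal.exists_frontier_subset_lines {B : Set E²} {S : Set (Set E²)}
    (hpoly : IsPolygonal B S) (P : E²) :
    ∃ r > 0, ∃ L : Set (Submodule ℝ E²), L.Finite ∧ (∀ D ∈ L, finrank ℝ D = 1) ∧
      ∀ x ∈ ball P r ∩ frontier B, ∃ D ∈ L, x - P ∈ D := by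
  choose! line hline hsubline using fun s hs => (hpoly.seg s hs).2.2.2
  set F := {s ∈ S | (s ∩ ball P 1).Nonempty}
  have hF : F.Finite := hpoly.loc_finite _ isBounded_ball
  have hfar : IsOpen (⋂ s ∈ {s ∈ F | P ∉ s}, sᶜ) :=
    (hF.subset (sep_subset _ _)).isOpen_biInter fun s hs => (hpoly.seg s hs.1.1).1.isOpen_compl
  obtain ⟨r, hr, hball⟩ := Metric.isOpen_iff.1 hfar P (mem_iInter₂.2 fun s hs => hs.2)
  refine ⟨min r 1, lt_min hr one_pos, (fun s => (line s).direction) '' {s ∈ F | P ∈ s},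
    (hF.subset (sep_subset _ _)).image _, ?_, ?_⟩
  · rintro _ ⟨s, hs, rfl⟩
    exact (hline s hs.1.1).2
  · rintro x ⟨hx, hxfr⟩
    rw [hpoly.boundary] at hxfr
    obtain ⟨s, hsS, hxs⟩ := hxfr
    have hsF : s ∈ F := ⟨hsS, x, hxs, ball_subset_ball (min_le_right _ _) hx⟩
    have hPs : P ∈ s := by
      by_contra hPs
      exact mem_iInter₂.1 (hball (ball_subset_ball (min_le_left _ _) hx)) s ⟨hsF, hPs⟩ hxs
    exact ⟨_, ⟨s, ⟨hsF, hPs⟩, rfl⟩,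
      AffineSubspace.vsub_mem_direction (hsubline s hsS hxs) (hsubline s hsS hPs)⟩

lemma IsPolygonal.nearSector_interior_compl {B : Set E²} {S : Set (Set E²)}
    (hpoly : IsPolygonal B S) {P : E²} (hP : ¬NearSector (interior B) P) :
    NearSector (interior Bᶜ) P := by
  obtain ⟨r, hr, L, hL, hLrank, hfrontier⟩ := hpoly.exists_frontier_subset_lines P
  exact (nearSector_interior_or_nearSector_interior_compl hr hL hLrank hfrontier).resolve_left hP

lemma C3.compl {B : Set E²} (h : C3 B) : C3 Bᶜ := by
  intro X Y Z hXY hYZ hZX hmono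
  simp only [frontier_compl, mem_compl_iff, not_not] at hmono ⊢
  exact h X Y Z hXY hYZ hZX hmono.symm

lemma C3.false_of_mem_interior {B : Set E²} (h : C3 B) {X Y Z : E²} (hXY : dist X Y = 1)
    (hYZ : dist Y Z = 1) (hZX : dist Z X = 1) (hX : X ∈ interior B) (hY : Y ∈ interior B)
    (hZ : Z ∈ interior B) : False := by
  rcases h X Y Z hXY hYZ hZX (Or.inl ⟨interior_subset hX, interior_subset hY,
    interior_subset hZ⟩) with hX' | hY' | hZ'
  exacts [hX'.2 hX, hY'.2 hY, hZ'.2 hZ]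

lemma C3.false_of_nearSector_interior {B : Set E²} (h : C3 B) {X Y Z : E²}
    (hXY : dist X Y = 1) (hYZ : dist Y Z = 1) (hZX : dist Z X = 1)
    (hX : NearSector (interior B) X) (hY : NearSector (interior B) Y)
    (hZ : NearSector (interior B) Z) : False := by
  obtain ⟨v, hXv, hYv, hZv⟩ := hX.exists_common_translate hY hZ
  exact h.false_of_mem_interior (by rwa [dist_add_right]) (by rwa [dist_add_right])
    (by rwa [dist_add_right]) hXv hYv hZv

end PolygonalColoring

theorem stmt10 (B : Set (EuclideanSpace ℝ (Fin 2))) (S : Set (Set (EuclideanSpace ℝ (Fin 2))))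
    (hpoly : IsPolygonal B S) (hC3 : C3 B) :
    ∃ B' : Set (EuclideanSpace ℝ (Fin 2)), symmDiff B' B ⊆ frontier B ∧
      ¬∃ X Y Z : EuclideanSpace ℝ (Fin 2),
        ((X ∈ B' ∧ Y ∈ B' ∧ Z ∈ B') ∨ (X ∉ B' ∧ Y ∉ B' ∧ Z ∉ B')) ∧
        dist X Y = 1 ∧ dist Y Z = 1 ∧ dist Z X = 1 := by
  refine ⟨{P | NearSector (interior B) P}, fun x hx => ?_, ?_⟩
  · by_contra hxf
    have hiff := nearSector_interior_iff_mem hxf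
    rw [mem_symmDiff] at hx
    tauto
  · rintro ⟨X, Y, Z, ⟨hX, hY, hZ⟩ | ⟨hX, hY, hZ⟩, hXY, hYZ, hZX⟩
    · exact hC3.false_of_nearSector_interior hXY hYZ hZX hX hY hZ
    · exact hC3.compl.false_of_nearSector_interior hXY hYZ hZX
        (hpoly.nearSector_interior_compl hX) (hpoly.nearSector_interior_compl hY)
        (hpoly.nearSector_interior_compl hZ)

end
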